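/- arXiv:2107.04480 — 2 statements merged into one kernel-verified Lean document; each statement's English description precedes it below -/
import Mathlib

section
/- Let ε ~ N(0, σ_ε²) and δ ~ N(0, σ_δ²) be independent, v, θ real constants, and Δc = v cosθ (cos δ − 1) − v sinθ sin δ + ε cosθ cos δ − ε sinθ sin δ. Then Var[Δc] = v² e^{-σ_δ²} [cos²θ (cosh σ_δ² − 1) + sin²θ sinh σ_δ²] + σ_ε² e^{-σ_δ²} [cos²θ cosh σ_δ² + sin²θ sinh σ_δ²]. -/
/-!
Writing `Δc = (v + ε) cos (θ + δ) - v cos θ` exhibits it, up to a constant, as a product of two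
independent square-integrable factors, so
`Var Δc = E[(v + ε)²] E[cos² (θ + δ)] - v² E[cos (θ + δ)]²`.
The Gaussian moments of `cos (θ + δ)` are real parts of the characteristic function,
`E[cos (a + t δ)] = cos a · exp (-t² σ_δ² / 2)`; the second moment follows from the double-angle
formula with `t = 2`.
-/

open MeasureTheory ProbabilityTheory Real
open scoped NNReal ENNReal

lemma integral_cos_add_mul_gaussianReal (μ : ℝ) (v : ℝ≥0) (a t : ℝ) :
    ∫ x, cos (a + t * x) ∂gaussianReal μ v = cos (a + t * μ) * exp (-(v * t ^ 2) / 2) := by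
  have hint : Integrable (fun x : ℝ => Complex.exp ((a + t * x : ℝ) * Complex.I))
      (gaussianReal μ v) :=
    (integrable_const (1 : ℝ)).mono' (by fun_prop)
      (ae_of_all _ fun x => by rw [Complex.norm_exp_ofReal_mul_I])
  have hcharFun : ∫ x, Complex.exp ((a + t * x : ℝ) * Complex.I) ∂gaussianReal μ v
      = Complex.exp ((a + t * μ : ℝ) * Complex.I) * (exp (-(v * t ^ 2) / 2) : ℂ) := by
    simp_rw [Complex.ofReal_add, add_mul, Complex.exp_add, Complex.ofReal_mul]
    rw [integral_const_mul, ← charFun_apply_real, charFun_gaussianReal, Complex.ofReal_exp]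
    simp only [← Complex.exp_add]
    congr 1
    push_cast
    ring
  calc ∫ x, cos (a + t * x) ∂gaussianReal μ v
      = ∫ x, (Complex.exp ((a + t * x : ℝ) * Complex.I)).re ∂gaussianReal μ v := by
        simp_rw [Complex.exp_ofReal_mul_I_re]
    _ = (∫ x, Complex.exp ((a + t * x : ℝ) * Complex.I) ∂gaussianReal μ v).re := integral_re hint
    _ = cos (a + t * μ) * exp (-(v * t ^ 2) / 2) := by
        rw [hcharFun, Complex.re_mul_ofReal, Complex.exp_ofReal_mul_I_re]

lemma integral_cos_add_sq_gaussianReal (μ : ℝ) (v : ℝ≥0) (a : ℝ) :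
    ∫ x, cos (a + x) ^ 2 ∂gaussianReal μ v
      = exp (-v) * (cos (a + μ) ^ 2 * cosh v + sin (a + μ) ^ 2 * sinh v) := by
  have hcos_sq : ∀ x, cos (a + x) ^ 2 = 1 / 2 + cos (2 * a + 2 * x) / 2 := fun x => by
    rw [cos_sq]; ring_nf
  have hint : Integrable (fun x => cos (2 * a + 2 * x) / 2) (gaussianReal μ v) :=
    (integrable_const (1 / 2 : ℝ)).mono' (by fun_prop) (ae_of_all _ fun x => by
      rw [norm_div, norm_eq_abs, Real.norm_two]; linarith [abs_cos_le_one (2 * a + 2 * x)])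
  have hexp : exp (-(v * 2 ^ 2) / 2) = exp (-v) * exp (-v) := by
    rw [← exp_add]; ring_nf
  have hinv : exp (-v) * exp v = 1 := by
    rw [← exp_add, neg_add_cancel, exp_zero]
  simp_rw [hcos_sq]
  rw [integral_add (integrable_const _) hint, integral_const, integral_div,
    integral_cos_add_mul_gaussianReal, probReal_univ, one_smul, hexp, cosh_eq, sinh_eq,
    ← mul_add, cos_two_mul, sin_sq]
  linear_combination (-1 / 2 : ℝ) * hinv

lemma integral_sq_gaussianReal (μ : ℝ) (v : ℝ≥0) :
    ∫ x, x ^ 2 ∂gaussianReal μ v = μ ^ 2 + v := by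
  have h := variance_eq_sub (memLp_id_gaussianReal' (μ := μ) (v := v) 2 (by norm_num))
  simp only [variance_id_gaussianReal, Pi.pow_apply, id, integral_id_gaussianReal] at h
  linarith

lemma ProbabilityTheory.HasLaw.memLp_iff {Ω : Type*} {mΩ : MeasurableSpace Ω} {P : Measure Ω}
    {X : Ω → ℝ} {μ : Measure ℝ} (hX : HasLaw X μ P) {p : ℝ≥0∞} :
    MemLp X p P ↔ MemLp id p μ := by
  rw [← hX.map_eq, memLp_map_measure_iff aestronglyMeasurable_id hX.aemeasurable, Function.id_comp]

lemma ProbabilityTheory.IndepFun.variance_fun_mul {Ω : Type*} {mΩ : MeasurableSpace Ω}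
    {P : Measure Ω} [IsProbabilityMeasure P] {X Y : Ω → ℝ} (hXY : X ⟂ᵢ[P] Y)
    (hX : MemLp X 2 P) (hY : MemLp Y 2 P) :
    Var[fun ω => X ω * Y ω; P]
      = (∫ ω, X ω ^ 2 ∂P) * (∫ ω, Y ω ^ 2 ∂P) - (∫ ω, X ω ∂P) ^ 2 * (∫ ω, Y ω ∂P) ^ 2 := by
  have hXYsq : (fun ω => X ω ^ 2) ⟂ᵢ[P] (fun ω => Y ω ^ 2) :=
    hXY.comp (φ := fun x : ℝ => x ^ 2) (ψ := fun x : ℝ => x ^ 2) (by fun_prop) (by fun_prop)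
  have hmem : MemLp (fun ω => X ω * Y ω) 2 P := by
    refine (memLp_two_iff_integrable_sq (hX.1.mul hY.1)).2 ?_
    simpa only [Pi.mul_def, mul_pow] using
      hXYsq.integrable_mul hX.integrable_sq hY.integrable_sq
  rw [variance_eq_sub hmem]
  simp only [Pi.pow_apply, mul_pow]
  rw [hXYsq.integral_fun_mul_eq_mul_integral (hX.1.pow 2) (hY.1.pow 2),
    hXY.integral_fun_mul_eq_mul_integral hX.1 hY.1, mul_pow]

theorem phasor_noise_real_part_variance {Ω : Type*} [MeasurableSpace Ω]
    (P : Measure Ω) [IsProbabilityMeasure P] (σε σδ : NNReal) (v θ : ℝ)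
    (ε δ : Ω → ℝ) (hε : Measurable ε) (hδ : Measurable δ)
    (hmapε : Measure.map ε P = gaussianReal 0 (σε ^ 2))
    (hmapδ : Measure.map δ P = gaussianReal 0 (σδ ^ 2))
    (hindep : IndepFun ε δ P) :
    variance (fun ω => v * Real.cos θ * (Real.cos (δ ω) - 1) - v * Real.sin θ * Real.sin (δ ω)
        + ε ω * Real.cos θ * Real.cos (δ ω) - ε ω * Real.sin θ * Real.sin (δ ω)) P
      = v ^ 2 * Real.exp (-(σδ : ℝ) ^ 2) *
          (Real.cos θ ^ 2 * (Real.cosh ((σδ : ℝ) ^ 2) - 1)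
            + Real.sin θ ^ 2 * Real.sinh ((σδ : ℝ) ^ 2))
        + (σε : ℝ) ^ 2 * Real.exp (-(σδ : ℝ) ^ 2) *
          (Real.cos θ ^ 2 * Real.cosh ((σδ : ℝ) ^ 2)
            + Real.sin θ ^ 2 * Real.sinh ((σδ : ℝ) ^ 2)) := by
  have hδlaw : HasLaw δ (gaussianReal 0 (σδ ^ 2)) P := ⟨hδ.aemeasurable, hmapδ⟩
  have hXlaw : HasLaw (fun ω => v + ε ω) (gaussianReal v (σε ^ 2)) P := by
    refine HasLaw.fun_comp ⟨by fun_prop, ?_⟩ ⟨hε.aemeasurable, hmapε⟩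
    rw [gaussianReal_map_const_add, zero_add]
  have hX : MemLp (fun ω => v + ε ω) 2 P :=
    hXlaw.memLp_iff.2 (memLp_id_gaussianReal' 2 (by norm_num))
  have hY : MemLp (fun ω => cos (θ + δ ω)) 2 P :=
    MemLp.of_bound (by fun_prop) 1 (ae_of_all _ fun ω => by simpa using abs_cos_le_one (θ + δ ω))
  have hXY : (fun ω => v + ε ω) ⟂ᵢ[P] (fun ω => cos (θ + δ ω)) :=
    hindep.comp (φ := fun x => v + x) (ψ := fun x => cos (θ + x)) (by fun_prop) (by fun_prop)
  have hEX2 : ∫ ω, (v + ε ω) ^ 2 ∂P = v ^ 2 + σε ^ 2 := by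
    rw [← NNReal.coe_pow, ← integral_sq_gaussianReal]
    exact hXlaw.integral_comp (f := fun x => x ^ 2) (by fun_prop)
  have hEY : ∫ ω, cos (θ + δ ω) ∂P = cos θ * exp (-(σδ : ℝ) ^ 2 / 2) := by
    refine (hδlaw.integral_comp (f := fun x => cos (θ + x)) (by fun_prop)).trans ?_
    have h := integral_cos_add_mul_gaussianReal 0 (σδ ^ 2) θ 1
    push_cast at h
    simpa using h
  have hEY2 : ∫ ω, cos (θ + δ ω) ^ 2 ∂P = exp (-(σδ : ℝ) ^ 2)
      * (cos θ ^ 2 * cosh ((σδ : ℝ) ^ 2) + sin θ ^ 2 * sinh ((σδ : ℝ) ^ 2)) := by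
    refine (hδlaw.integral_comp (f := fun x => cos (θ + x) ^ 2) (by fun_prop)).trans ?_
    have h := integral_cos_add_sq_gaussianReal 0 (σδ ^ 2) θ
    push_cast at h
    simpa using h
  have hΔc : (fun ω => v * cos θ * (cos (δ ω) - 1) - v * sin θ * sin (δ ω)
        + ε ω * cos θ * cos (δ ω) - ε ω * sin θ * sin (δ ω))
      = fun ω => (v + ε ω) * cos (θ + δ ω) - v * cos θ := by
    funext ω; rw [cos_add]; ring
  have hexp : exp (-(σδ : ℝ) ^ 2 / 2) ^ 2 = exp (-(σδ : ℝ) ^ 2) := by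
    rw [← exp_nat_mul]; ring_nf
  rw [hΔc, variance_sub_const (by fun_prop), hXY.variance_fun_mul hX hY, hEX2, hEY, hEY2,
    hXlaw.integral_eq, integral_id_gaussianReal, mul_pow, hexp]
  ring
end

section
/- Let ε ~ N(0, σ_ε²) and δ ~ N(0, σ_δ²) be independent, v, θ real, Δc and Δd the real and imaginary Cartesian phasor errors as defined by Δc = v cosθ(cos δ − 1) − v sinθ sin δ + ε cosθ cos δ − ε sinθ sin δ and Δd = v sinθ(cos δ − 1) + v cosθ sin δ + ε sinθ cos δ + ε cosθ sin δ. Then Cov[Δc, Δd] = sinθ cosθ e^{-2σ_δ²} [σ_ε² + v² (1 − e^{σ_δ²})]. -/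
/-!
Write `Δc + i Δd = W := e^{iθ} (Z - v)` with `Z = (v + ε) e^{iδ}`. For any square-integrable
complex `W`, `Cov[Re W, Im W] = Im (E[W²] - E[W]²) / 2`, and this pseudo-variance is multiplied by
`e^{2iθ}` under `W ↦ e^{iθ} (W - v)`. Since the amplitude `v + ε` and the phase `e^{iδ}` are
independent, the pseudo-variance of `Z` is `E[(v + ε)²] E[e^{2iδ}] - (E[v + ε] E[e^{iδ}])²`, and the
Gaussian characteristic function gives `E[e^{inδ}] = e^{-n² σ_δ² / 2}`.
-/

open MeasureTheory ProbabilityTheory Complex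

lemma MeasureTheory.MemLp.integrable_fun_sq {α 𝕜 : Type*} {mα : MeasurableSpace α}
    {μ : Measure α} [NormedRing 𝕜] {f : α → 𝕜} (hf : MemLp f 2 μ) :
    Integrable (fun x => f x ^ 2) μ := by
  simp only [pow_two]
  exact hf.integrable_mul hf

lemma MeasureTheory.MemLp.mul_cexp_ofReal_mul_I {α : Type*} {mα : MeasurableSpace α}
    {μ : Measure α} {p : ENNReal} {f : α → ℂ} {g : α → ℝ} (hf : MemLp f p μ)
    (hg : AEStronglyMeasurable g μ) : MemLp (fun x => f x * cexp (g x * I)) p μ :=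
  hf.congr_norm (hf.aestronglyMeasurable.mul (by fun_prop))
    (ae_of_all _ fun x => by simp [norm_exp_ofReal_mul_I])

namespace ProbabilityTheory

noncomputable def pseudoVariance {Ω : Type*} {mΩ : MeasurableSpace Ω} (W : Ω → ℂ)
    (μ : Measure Ω) : ℂ :=
  ∫ ω, W ω ^ 2 ∂μ - (∫ ω, W ω ∂μ) ^ 2

section PseudoVariance

variable {Ω : Type*} {mΩ : MeasurableSpace Ω} {μ : Measure Ω} {W : Ω → ℂ}

lemma integral_re_mul_im_sub_mul_integral [IsFiniteMeasure μ] (hW : MemLp W 2 μ) :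
    ∫ ω, (W ω).re * (W ω).im ∂μ - (∫ ω, (W ω).re ∂μ) * ∫ ω, (W ω).im ∂μ
      = (pseudoVariance W μ).im / 2 := by
  have hW1 := hW.integrable one_le_two
  have hsq : ∀ z : ℂ, (z ^ 2).im = 2 * (z.re * z.im) := fun z => by
    rw [pow_two, mul_im]; ring
  have hprod : ∫ ω, (W ω).re * (W ω).im ∂μ = (∫ ω, W ω ^ 2 ∂μ).im / 2 := by
    simp_rw [← RCLike.im_to_complex, ← integral_im hW.integrable_fun_sq, RCLike.im_to_complex,
      hsq, integral_const_mul]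
    ring
  simp_rw [hprod, ← RCLike.re_to_complex, ← RCLike.im_to_complex, integral_re hW1,
    integral_im hW1, RCLike.re_to_complex, RCLike.im_to_complex, pseudoVariance, sub_im, hsq]
  ring

lemma pseudoVariance_const_mul (a : ℂ) :
    pseudoVariance (fun ω => a * W ω) μ = a ^ 2 * pseudoVariance W μ := by
  simp_rw [pseudoVariance, mul_pow, integral_const_mul]
  ring

lemma pseudoVariance_sub_const [IsProbabilityMeasure μ] (hW : MemLp W 2 μ) (b : ℂ) :
    pseudoVariance (fun ω => W ω - b) μ = pseudoVariance W μ := by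
  have hW1 := hW.integrable one_le_two
  have hexpand : (fun ω => (W ω - b) ^ 2) = fun ω => W ω ^ 2 - 2 * b * W ω + b ^ 2 := by
    funext ω; ring
  rw [pseudoVariance, pseudoVariance, hexpand,
    integral_add (f := fun ω => W ω ^ 2 - 2 * b * W ω)
      (hW.integrable_fun_sq.sub (hW1.const_mul _)) (integrable_const _),
    integral_sub hW.integrable_fun_sq (hW1.const_mul _), integral_sub hW1 (integrable_const _),
    integral_const_mul]
  simp
  ring

lemma IndepFun.pseudoVariance_mul {X Y : Ω → ℂ} (hXY : IndepFun X Y μ)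
    (hX : AEStronglyMeasurable X μ) (hY : AEStronglyMeasurable Y μ) :
    pseudoVariance (fun ω => X ω * Y ω) μ
      = (∫ ω, X ω ^ 2 ∂μ) * (∫ ω, Y ω ^ 2 ∂μ) - (∫ ω, X ω ∂μ) ^ 2 * (∫ ω, Y ω ∂μ) ^ 2 := by
  have hsq : IndepFun (fun ω => X ω ^ 2) (fun ω => Y ω ^ 2) μ :=
    hXY.comp (measurable_id.pow_const 2) (measurable_id.pow_const 2)
  simp_rw [pseudoVariance, mul_pow]
  rw [hsq.integral_fun_mul_eq_mul_integral (hX.pow 2) (hY.pow 2),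
    hXY.integral_fun_mul_eq_mul_integral hX hY, mul_pow]

end PseudoVariance

section Gaussian

variable {Ω : Type*} {mΩ : MeasurableSpace Ω} {P : Measure Ω} {X Y : Ω → ℝ} {m : ℝ}
  {s t : NNReal}

lemma integral_sq_gaussianReal : ∫ x, x ^ 2 ∂gaussianReal m s = m ^ 2 + s := by
  have h := variance_eq_sub (memLp_id_gaussianReal (μ := m) (v := s) 2)
  simp only [variance_id_gaussianReal, id, Pi.pow_apply, integral_id_gaussianReal] at h
  linarith

lemma HasLaw.memLp_gaussianReal (hX : HasLaw X (gaussianReal m s) P) {p : ENNReal}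
    (hp : p ≠ ⊤) : MemLp X p P := by
  have h := memLp_id_gaussianReal' (μ := m) (v := s) p hp
  rw [← hX.map_eq] at h
  exact (memLp_map_measure_iff aestronglyMeasurable_id hX.aemeasurable).1 h

lemma HasLaw.integral_sq_gaussianReal (hX : HasLaw X (gaussianReal m s) P) :
    ∫ ω, X ω ^ 2 ∂P = m ^ 2 + s := by
  rw [← ProbabilityTheory.integral_sq_gaussianReal]
  exact hX.integral_comp (f := fun x => x ^ 2) (by fun_prop)

lemma HasLaw.integral_cexp_mul_I_pow_gaussianReal (hY : HasLaw Y (gaussianReal 0 t) P)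
    (n : ℕ) : ∫ ω, cexp (Y ω * I) ^ n ∂P = Real.exp (-(t * n ^ 2) / 2) := by
  have h := hY.integral_comp (f := fun y : ℝ => cexp ((n : ℝ) * y * I)) (by fun_prop)
  rw [← charFun_apply_real, charFun_gaussianReal] at h
  simp_rw [← Complex.exp_nat_mul, ← mul_assoc]
  push_cast at h ⊢
  rw [Function.comp_def] at h
  rw [h]
  congr 1
  ring

lemma pseudoVariance_mul_cexp_mul_I_gaussianReal (hX : HasLaw X (gaussianReal m s) P)
    (hY : HasLaw Y (gaussianReal 0 t) P) (hXY : IndepFun X Y P) :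
    pseudoVariance (fun ω => X ω * cexp (Y ω * I)) P
      = ((m ^ 2 + s) * Real.exp (-2 * t) - m ^ 2 * Real.exp (-t) : ℝ) := by
  have hindep : IndepFun (fun ω => (X ω : ℂ)) (fun ω => cexp (Y ω * I)) P :=
    hXY.comp (φ := fun x : ℝ => (x : ℂ)) (ψ := fun y : ℝ => cexp (y * I)) (by fun_prop)
      (by fun_prop)
  have hX1 : ∫ ω, (X ω : ℂ) ∂P = m := by
    rw [integral_complex_ofReal, hX.integral_eq, integral_id_gaussianReal]
  have hX2 : ∫ ω, (X ω : ℂ) ^ 2 ∂P = ((m ^ 2 + s : ℝ) : ℂ) := by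
    simp_rw [← ofReal_pow, integral_complex_ofReal, hX.integral_sq_gaussianReal]
  have hY1 : ∫ ω, cexp (Y ω * I) ∂P = Real.exp (-t / 2) := by
    simpa using hY.integral_cexp_mul_I_pow_gaussianReal 1
  have hXm := hX.aemeasurable
  have hYm := hY.aemeasurable
  rw [hindep.pseudoVariance_mul (by fun_prop) (by fun_prop), hX1, hX2, hY1,
    hY.integral_cexp_mul_I_pow_gaussianReal 2]
  rw [← ofReal_pow (Real.exp _), ← Real.exp_nat_mul]
  push_cast
  ring_nf

end Gaussian

end ProbabilityTheory

noncomputable def phasorError (v θ e d : ℝ) : ℂ :=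
  cexp (θ * I) * ((v + e : ℝ) * cexp (d * I) - v)

lemma phasorError_re (v θ e d : ℝ) :
    (phasorError v θ e d).re = v * Real.cos θ * (Real.cos d - 1) - v * Real.sin θ * Real.sin d
      + e * Real.cos θ * Real.cos d - e * Real.sin θ * Real.sin d := by
  simp [phasorError, exp_ofReal_mul_I_re, exp_ofReal_mul_I_im]
  ring

lemma phasorError_im (v θ e d : ℝ) :
    (phasorError v θ e d).im = v * Real.sin θ * (Real.cos d - 1) + v * Real.cos θ * Real.sin d
      + e * Real.sin θ * Real.cos d + e * Real.cos θ * Real.sin d := by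
  simp [phasorError, exp_ofReal_mul_I_re, exp_ofReal_mul_I_im]
  ring

theorem phasor_noise_covariance {Ω : Type*} [MeasurableSpace Ω]
    (P : Measure Ω) [IsProbabilityMeasure P] (σε σδ : NNReal) (v θ : ℝ)
    (ε δ : Ω → ℝ) (hε : Measurable ε) (hδ : Measurable δ)
    (hmapε : Measure.map ε P = gaussianReal 0 (σε ^ 2))
    (hmapδ : Measure.map δ P = gaussianReal 0 (σδ ^ 2))
    (hindep : IndepFun ε δ P)
    (Δc Δd : Ω → ℝ)
    (hΔc : Δc = fun ω => v * Real.cos θ * (Real.cos (δ ω) - 1) - v * Real.sin θ * Real.sin (δ ω)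
        + ε ω * Real.cos θ * Real.cos (δ ω) - ε ω * Real.sin θ * Real.sin (δ ω))
    (hΔd : Δd = fun ω => v * Real.sin θ * (Real.cos (δ ω) - 1) + v * Real.cos θ * Real.sin (δ ω)
        + ε ω * Real.sin θ * Real.cos (δ ω) + ε ω * Real.cos θ * Real.sin (δ ω)) :
    (∫ ω, Δc ω * Δd ω ∂P) - (∫ ω, Δc ω ∂P) * (∫ ω, Δd ω ∂P)
      = Real.sin θ * Real.cos θ * Real.exp (-2 * (σδ : ℝ) ^ 2) *
          ((σε : ℝ) ^ 2 + v ^ 2 * (1 - Real.exp ((σδ : ℝ) ^ 2))) := by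
  have hamp := gaussianReal_const_add ⟨hε.aemeasurable, hmapε⟩ v
  have hphase : HasLaw δ (gaussianReal 0 (σδ ^ 2)) P := ⟨hδ.aemeasurable, hmapδ⟩
  have hZ : MemLp (fun ω => ((v + ε ω : ℝ) : ℂ) * cexp (δ ω * I)) 2 P :=
    (hamp.memLp_gaussianReal ENNReal.ofNat_ne_top).ofReal.mul_cexp_ofReal_mul_I
      hδ.aestronglyMeasurable
  obtain rfl : Δc = fun ω => (phasorError v θ (ε ω) (δ ω)).re := by simp only [hΔc, phasorError_re]
  obtain rfl : Δd = fun ω => (phasorError v θ (ε ω) (δ ω)).im := by simp only [hΔd, phasorError_im]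
  calc _ = (pseudoVariance (fun ω => phasorError v θ (ε ω) (δ ω)) P).im / 2 :=
        integral_re_mul_im_sub_mul_integral ((hZ.sub (memLp_const _)).const_mul _)
    _ = (cexp (θ * I) ^ 2 * pseudoVariance (fun ω => ((v + ε ω : ℝ) : ℂ) * cexp (δ ω * I)) P).im
          / 2 := by
        simp only [phasorError]
        rw [pseudoVariance_const_mul, pseudoVariance_sub_const hZ]
    _ = ((v ^ 2 + σε ^ 2) * Real.exp (-2 * σδ ^ 2) - v ^ 2 * Real.exp (-σδ ^ 2))
          * Real.sin (2 * θ) / 2 := by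
        rw [pseudoVariance_mul_cexp_mul_I_gaussianReal hamp hphase
          (hindep.comp (measurable_const_add v) measurable_id), ← Complex.exp_nat_mul, mul_comm,
          im_ofReal_mul, ← exp_ofReal_mul_I_im]
        push_cast
        ring_nf
    _ = _ := by
        rw [Real.sin_two_mul, show Real.exp (-σδ ^ 2) = Real.exp (-2 * σδ ^ 2) * Real.exp (σδ ^ 2)
          by rw [← Real.exp_add]; ring_nf]
        ring
end
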